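/- arXiv:2309.15229 — 7 statements merged into one kernel-verified Lean document; each statement's English description precedes it below -/
import Mathlib

section
/- Let Φ be a Young function, finite-valued and nonzero outside the origin. Then p_Φ = sup_{t>0} tΦ'₊(t)/Φ(t) = 1 if and only if Φ is linear, i.e. Φ(t) = Ct for some constant C > 0. -/
/-!
A convex `Φ` with `Φ 0 = 0` has `Φ t / t` nondecreasing on `(0, ∞)`. On the other hand, the right
derivative at `t` dominates every chord slope ending at `t`, so `t Φ'₊(t) ≤ Φ t` forces
`Φ t / t ≤ Φ s / s` for `s < t`. Hence `p_Φ ≤ 1` makes `Φ t / t` constant, i.e. `Φ` linear;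
for linear `Φ` every quotient `t Φ'₊(t) / Φ t` equals `1`.
-/

open Filter Set

namespace ConvexOn

variable {S : Set ℝ} {f : ℝ → ℝ} {x y : ℝ}

lemma slope_le_rightDeriv_of_mem_interior (hf : ConvexOn ℝ S f) (hx : x ∈ S)
    (hy : y ∈ interior S) (hxy : x < y) :
    slope f x y ≤ derivWithin f (Ici y) y := by
  rw [← derivWithin_Ioi_eq_Ici]
  exact (hf.slope_le_leftDeriv_of_mem_interior hx hy hxy).trans
    (hf.leftDeriv_le_rightDeriv_of_mem_interior hy)

variable {Φ : ℝ → ℝ}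

lemma monotoneOn_div_self (hΦ : ConvexOn ℝ (Ici 0) Φ) (h0 : Φ 0 = 0) :
    MonotoneOn (fun t ↦ Φ t / t) (Ioi 0) := by
  have hslope : ∀ t, slope Φ 0 t = Φ t / t := fun t ↦ by
    rw [slope_def_field, h0, sub_zero, sub_zero]
  intro s (hs : 0 < s) t (ht : 0 < t) hst
  simp only [← hslope]
  exact hΦ.slope_mono self_mem_Ici ⟨hs.le, hs.ne'⟩ ⟨ht.le, ht.ne'⟩ hst

lemma antitoneOn_div_self_of_mul_rightDeriv_le (hΦ : ConvexOn ℝ (Ici 0) Φ)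
    (hD : ∀ t, 0 < t → t * derivWithin Φ (Ici t) t ≤ Φ t) :
    AntitoneOn (fun t ↦ Φ t / t) (Ioi 0) := by
  intro s (hs : 0 < s) t (ht : 0 < t) hst
  rcases hst.eq_or_lt with rfl | hst
  · rfl
  have hchord : slope Φ s t ≤ Φ t / t := by
    have hint : t ∈ interior (Ici (0 : ℝ)) := by rwa [interior_Ici]
    calc slope Φ s t ≤ derivWithin Φ (Ici t) t :=
          hΦ.slope_le_rightDeriv_of_mem_interior hs.le hint hst
      _ ≤ Φ t / t := (le_div_iff₀ ht).2 (by linarith [hD t ht])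
  rw [slope_def_field, div_le_div_iff₀ (sub_pos.2 hst) ht] at hchord
  rw [div_le_div_iff₀ ht hs]
  linarith

lemma eq_mul_of_mul_rightDeriv_le (hΦ : ConvexOn ℝ (Ici 0) Φ) (h0 : Φ 0 = 0)
    (hD : ∀ t, 0 < t → t * derivWithin Φ (Ici t) t ≤ Φ t) :
    ∀ t, 0 ≤ t → Φ t = Φ 1 * t := by
  have hmono := hΦ.monotoneOn_div_self h0
  have hanti := hΦ.antitoneOn_div_self_of_mul_rightDeriv_le hD
  have hconst : ∀ t, 0 < t → Φ t / t = Φ 1 / 1 := by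
    intro t ht
    have h1 : (1 : ℝ) ∈ Ioi 0 := mem_Ioi.2 one_pos
    rcases le_total t 1 with htl | htl
    · exact le_antisymm (hmono ht h1 htl) (hanti ht h1 htl)
    · exact le_antisymm (hanti h1 ht htl) (hmono h1 ht htl)
  intro t ht
  rcases ht.eq_or_lt with rfl | ht
  · rw [h0, mul_zero]
  · rw [← div_eq_iff ht.ne', hconst t ht, div_one]

end ConvexOn

lemma derivWithin_Ici_of_eqOn_mul {Φ : ℝ → ℝ} {C t : ℝ} (hlin : ∀ s, 0 ≤ s → Φ s = C * s)
    (ht : 0 ≤ t) : derivWithin Φ (Ici t) t = C := by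
  have hEq : EqOn Φ (fun s ↦ C * s) (Ici t) := fun s hs ↦ hlin s (ht.trans hs)
  rw [derivWithin_congr hEq (hlin t ht)]
  simpa using ((hasDerivAt_id t).const_mul C).hasDerivWithinAt.derivWithin
    (uniqueDiffOn_Ici t t self_mem_Ici)

theorem pPhi_eq_one_iff_linear_general (Φ : ℝ → ℝ)
    (hconv : ConvexOn ℝ (Set.Ici 0) Φ) (h0 : Φ 0 = 0)
    (hpos : ∀ t, 0 < t → 0 < Φ t) :
    IsLUB {r : ℝ | ∃ t : ℝ, 0 < t ∧ r = t * derivWithin Φ (Set.Ici t) t / Φ t} 1 ↔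
      ∃ C : ℝ, 0 < C ∧ ∀ t, 0 ≤ t → Φ t = C * t := by
  constructor
  · intro hlub
    refine ⟨Φ 1, hpos 1 one_pos, hconv.eq_mul_of_mul_rightDeriv_le h0 fun t ht ↦ ?_⟩
    exact (div_le_one (hpos t ht)).1 (hlub.1 ⟨t, ht, rfl⟩)
  · rintro ⟨C, hC, hlin⟩
    have hone : ∀ t, 0 < t → t * derivWithin Φ (Ici t) t / Φ t = 1 := fun t ht ↦ by
      rw [derivWithin_Ici_of_eqOn_mul hlin ht.le, hlin t ht.le, mul_comm,
        div_self (mul_pos hC ht).ne']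
    have hset : {r : ℝ | ∃ t : ℝ, 0 < t ∧ r = t * derivWithin Φ (Ici t) t / Φ t} = {1} := by
      ext r
      constructor
      · rintro ⟨t, ht, rfl⟩
        exact hone t ht
      · rintro rfl
        exact ⟨1, one_pos, (hone 1 one_pos).symm⟩
    rw [hset]
    exact isLUB_singleton

/-- For a Young function `Φ`, finite and nonzero outside the origin,
`p_Φ = sup_{t>0} t Φ'₊(t)/Φ(t) = 1` (expressed via `IsLUB`) iff `Φ` is linear,
i.e. `Φ t = C t` for some `C > 0`. -/
theorem pPhi_eq_one_iff_linear (Φ : ℝ → ℝ)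
    (hconv : ConvexOn ℝ (Set.Ici 0) Φ) (h0 : Φ 0 = 0)
    (hnn : ∀ t, 0 ≤ t → 0 ≤ Φ t) (hlim : Tendsto Φ atTop atTop)
    (hpos : ∀ t, 0 < t → 0 < Φ t) :
    IsLUB {r : ℝ | ∃ t : ℝ, 0 < t ∧ r = t * derivWithin Φ (Set.Ici t) t / Φ t} 1 ↔
      ∃ C : ℝ, 0 < C ∧ ∀ t, 0 ≤ t → Φ t = C * t :=
  pPhi_eq_one_iff_linear_general Φ hconv h0 hpos
end

section
/- Let Φ be a Young function, finite-valued and nonzero outside the origin. Then q_Φ = inf_{t>0} tΦ'₊(t)/Φ(t) > 1 if and only if there exists p > 1 such that t ↦ Φ(t)/t^p is non-decreasing on (0,∞). -/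
/-!
For real `p`, `t ↦ Φ t / t ^ p` is monotone on `(0, ∞)` exactly when `p Φ(t) ≤ t Φ'₊(t)`
for all `t > 0`: one direction because the right derivative
`t ^ (p - 1) (t Φ'₊(t) - p Φ(t)) / t ^ (2p)` of the quotient is then nonnegative, the other by
comparing the right derivatives of `Φ` and of `s ↦ Φ(t) (s / t) ^ p ≤ Φ(s)` at `s = t`.
Hence `q_Φ` is the largest such `p`, which is finite because `Φ(t) / t ≤ Φ'₊(t)` by convexity.
-/

open Filter Set Topology

lemma monotoneOn_of_hasDerivWithinAt_Ici_nonneg {f f' : ℝ → ℝ} {D : Set ℝ} (hD : Convex ℝ D)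
    (hf : ContinuousOn f D) (hf' : ∀ x ∈ D, HasDerivWithinAt f (f' x) (Ici x) x)
    (hf'₀ : ∀ x ∈ D, 0 ≤ f' x) : MonotoneOn f D := by
  intro a ha b hb hab
  have hsub : Icc a b ⊆ D := hD.ordConnected.out ha hb
  exact image_le_of_deriv_right_le_deriv_boundary continuousOn_const
    (fun x _ ↦ hasDerivWithinAt_const x _ (f a)) le_rfl (hf.mono hsub)
    (fun x hx ↦ hf' x (hsub (Ico_subset_Icc_self hx)))
    (fun x hx ↦ hf'₀ x (hsub (Ico_subset_Icc_self hx)))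
    (right_mem_Icc.2 hab)

lemma HasDerivWithinAt.le_of_eventually_le {f g : ℝ → ℝ} {f' g' x : ℝ}
    (hg : HasDerivWithinAt g g' (Ioi x) x) (hf : HasDerivWithinAt f f' (Ioi x) x)
    (hle : ∀ᶠ y in 𝓝[>] x, g y ≤ f y) (heq : g x = f x) : g' ≤ f' := by
  rw [hasDerivWithinAt_iff_tendsto_slope' self_notMem_Ioi] at hf hg
  refine le_of_tendsto_of_tendsto hg hf ?_
  filter_upwards [hle, self_mem_nhdsWithin] with y hy (hxy : x < y)
  simp only [slope_def_field, heq]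
  gcongr

namespace ConvexOn

variable {S : Set ℝ} {f : ℝ → ℝ} {x : ℝ}

lemma hasDerivWithinAt_Ici_of_mem_interior (hf : ConvexOn ℝ S f) (hx : x ∈ interior S) :
    HasDerivWithinAt f (derivWithin f (Ici x) x) (Ici x) x := by
  rw [← derivWithin_Ioi_eq_Ici]
  exact (hf.hasDerivWithinAt_rightDeriv_of_mem_interior hx).Ici_of_Ioi

lemma div_le_derivWithin_Ici (hf : ConvexOn ℝ (Ici 0) f) (h0 : f 0 = 0) (hx : 0 < x) :
    f x / x ≤ derivWithin f (Ici x) x := by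
  have hx' : x ∈ interior (Ici (0 : ℝ)) := by simpa using hx
  calc f x / x = slope f 0 x := by simp [slope_def_field, h0]
    _ ≤ derivWithin f (Iio x) x := hf.slope_le_leftDeriv_of_mem_interior self_mem_Ici hx' hx
    _ ≤ derivWithin f (Ioi x) x := hf.leftDeriv_le_rightDeriv_of_mem_interior hx'
    _ = derivWithin f (Ici x) x := derivWithin_Ioi_eq_Ici f x

lemma monotoneOn_div_rpow_iff (hf : ConvexOn ℝ (Ioi 0) f) (p : ℝ) :
    MonotoneOn (fun t ↦ f t / t ^ p) (Ioi 0) ↔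
      ∀ t, 0 < t → p * f t ≤ t * derivWithin f (Ici t) t := by
  have hderiv : ∀ t, 0 < t → HasDerivWithinAt f (derivWithin f (Ici t) t) (Ici t) t :=
    fun t ht ↦ hf.hasDerivWithinAt_Ici_of_mem_interior (by rwa [interior_Ioi])
  have hrpow : ∀ t, 0 < t → HasDerivAt (fun s : ℝ ↦ s ^ p) (p * t ^ (p - 1)) t :=
    fun t ht ↦ Real.hasDerivAt_rpow_const (Or.inl ht.ne')
  constructor
  · intro hmono t ht
    have htp : 0 < t ^ p := Real.rpow_pos_of_pos ht p
    have hcomp : HasDerivWithinAt (fun s ↦ f t / t ^ p * s ^ p) (p * f t / t) (Ioi t) t := by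
      refine ((hrpow t ht).const_mul (f t / t ^ p)).hasDerivWithinAt.congr_deriv ?_
      rw [Real.rpow_sub_one ht.ne']
      field_simp
    have hle : ∀ᶠ s in 𝓝[>] t, f t / t ^ p * s ^ p ≤ f s := by
      filter_upwards [self_mem_nhdsWithin] with s (hts : t < s)
      have hsp : 0 < s ^ p := Real.rpow_pos_of_pos (ht.trans hts) p
      rw [← le_div_iff₀ hsp]
      exact hmono ht (ht.trans hts) hts.le
    have hderiv_le := hcomp.le_of_eventually_le ((hderiv t ht).mono Ioi_subset_Ici_self) hle
      (div_mul_cancel₀ _ htp.ne')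
    rwa [div_le_iff₀ ht, mul_comm _ t] at hderiv_le
  · intro hineq
    refine monotoneOn_of_hasDerivWithinAt_Ici_nonneg (convex_Ioi 0)
      ((hf.continuousOn isOpen_Ioi).div
        (continuousOn_id.rpow_const fun t ht ↦ Or.inl (ne_of_gt ht))
        fun t ht ↦ (Real.rpow_pos_of_pos ht p).ne')
      (fun t ht ↦ (hderiv t ht).div (hrpow t ht).hasDerivWithinAt
        (Real.rpow_pos_of_pos ht p).ne') fun t (ht : 0 < t) ↦ ?_
    have hnum : derivWithin f (Ici t) t * t ^ p - f t * (p * t ^ (p - 1)) =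
        t ^ (p - 1) * (t * derivWithin f (Ici t) t - p * f t) := by
      rw [Real.rpow_sub_one ht.ne']
      field_simp
    rw [hnum]
    exact div_nonneg (mul_nonneg (Real.rpow_nonneg ht.le _) (sub_nonneg.2 (hineq t ht)))
      (sq_nonneg _)

end ConvexOn

lemma le_sInf_mul_derivWithin_div_iff {Φ : ℝ → ℝ} (hconv : ConvexOn ℝ (Ici 0) Φ)
    (h0 : Φ 0 = 0) (hpos : ∀ t, 0 < t → 0 < Φ t) (p : ℝ) :
    p ≤ sInf {r : ℝ | ∃ t : ℝ, 0 < t ∧ r = t * derivWithin Φ (Ici t) t / Φ t} ↔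
      ∀ t, 0 < t → p * Φ t ≤ t * derivWithin Φ (Ici t) t := by
  have hbdd : BddBelow {r : ℝ | ∃ t : ℝ, 0 < t ∧ r = t * derivWithin Φ (Ici t) t / Φ t} := by
    refine ⟨1, ?_⟩
    rintro _ ⟨t, ht, rfl⟩
    rw [le_div_iff₀ (hpos t ht), one_mul, ← div_le_iff₀' ht]
    exact hconv.div_le_derivWithin_Ici h0 ht
  rw [le_csInf_iff hbdd ⟨_, 1, one_pos, rfl⟩]
  refine ⟨fun h t ht ↦ ?_, ?_⟩
  · exact (le_div_iff₀ (hpos t ht)).1 (h _ ⟨t, ht, rfl⟩)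
  · rintro h _ ⟨t, ht, rfl⟩
    exact (le_div_iff₀ (hpos t ht)).2 (h t ht)

theorem qPhi_gt_one_iff_monotone_general (Φ : ℝ → ℝ)
    (hconv : ConvexOn ℝ (Set.Ici 0) Φ) (h0 : Φ 0 = 0)
    (hpos : ∀ t, 0 < t → 0 < Φ t) :
    1 < sInf {r : ℝ | ∃ t : ℝ, 0 < t ∧ r = t * derivWithin Φ (Set.Ici t) t / Φ t} ↔
      ∃ p : ℝ, 1 < p ∧ ∀ t₁ t₂ : ℝ, 0 < t₁ → t₁ ≤ t₂ →
        Φ t₁ / t₁ ^ p ≤ Φ t₂ / t₂ ^ p := by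
  have hmono_iff (p : ℝ) :=
    (hconv.subset Ioi_subset_Ici_self (convex_Ioi 0)).monotoneOn_div_rpow_iff p
  have hindex_iff (p : ℝ) := le_sInf_mul_derivWithin_div_iff hconv h0 hpos p
  constructor
  · intro hq
    have hmono := (hmono_iff _).2 ((hindex_iff _).1 le_rfl)
    exact ⟨_, hq, fun t₁ t₂ ht₁ ht₁₂ ↦ hmono ht₁ (ht₁.trans_le ht₁₂) ht₁₂⟩
  · rintro ⟨p, hp, hmono⟩
    refine hp.trans_le ((hindex_iff p).2 ((hmono_iff p).1 ?_))
    exact fun t₁ ht₁ t₂ _ ht₁₂ ↦ hmono t₁ t₂ ht₁ ht₁₂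

/-- For a Young function `Φ`, finite and nonzero outside the origin,
`q_Φ = inf_{t>0} t Φ'₊(t)/Φ(t) > 1` iff there is `p > 1` such that
`t ↦ Φ(t)/t^p` is non-decreasing on `(0,∞)`. -/
theorem qPhi_gt_one_iff_monotone (Φ : ℝ → ℝ)
    (hconv : ConvexOn ℝ (Set.Ici 0) Φ) (h0 : Φ 0 = 0)
    (hnn : ∀ t, 0 ≤ t → 0 ≤ Φ t) (hlim : Tendsto Φ atTop atTop)
    (hpos : ∀ t, 0 < t → 0 < Φ t) :
    1 < sInf {r : ℝ | ∃ t : ℝ, 0 < t ∧ r = t * derivWithin Φ (Set.Ici t) t / Φ t} ↔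
      ∃ p : ℝ, 1 < p ∧ ∀ t₁ t₂ : ℝ, 0 < t₁ → t₁ ≤ t₂ →
        Φ t₁ / t₁ ^ p ≤ Φ t₂ / t₂ ^ p :=
  qPhi_gt_one_iff_monotone_general Φ hconv h0 hpos
end

section
/- Let Φ be a Young function, finite-valued and nonzero outside the origin. Then q_Φ > 1 if and only if Φ satisfies the Λ-condition, i.e. there exists p > 1 such that Φ(ct) ≤ c^p·Φ(t) for all t ≥ 0 and all c ∈ (0,1]. -/
open Filter Set Topology

/-!
If `q Φ(x) ≤ x Φ'₊(x)` for all `x > 0`, then `x ↦ Φ(x) x^{-q}` has a nonnegative right derivative,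
hence is nondecreasing, which is exactly `Φ(ct) ≤ c^q Φ(t)`; so `q_Φ > 1` yields the `Λ`-condition
with `p = q_Φ`. Conversely, the `Λ`-condition says that `u ↦ Φ(t) (u/t)^p` lies below `Φ` to the right
of `t` and touches it at `t`, so comparing right derivatives at `t` gives `p Φ(t) ≤ t Φ'₊(t)`,
whence `q_Φ ≥ p > 1`.
-/

theorem ConvexOn.hasDerivWithinAt_derivWithin_Ici {f : ℝ → ℝ} {S : Set ℝ} {x : ℝ}
    (hf : ConvexOn ℝ S f) (hx : x ∈ interior S) :
    HasDerivWithinAt f (derivWithin f (Ici x) x) (Ici x) x := by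
  rw [← derivWithin_Ioi_eq_Ici]
  exact (hf.hasDerivWithinAt_rightDeriv_of_mem_interior hx).Ici_of_Ioi

theorem le_of_hasDerivWithinAt_Ici_nonneg {f f' : ℝ → ℝ} {a b : ℝ} (hab : a ≤ b)
    (hf : ContinuousOn f (Icc a b)) (hf' : ∀ x ∈ Ico a b, HasDerivWithinAt f (f' x) (Ici x) x)
    (hf'_nonneg : ∀ x ∈ Ico a b, 0 ≤ f' x) : f a ≤ f b :=
  image_le_of_deriv_right_le_deriv_boundary continuousOn_const
    (fun x _ => hasDerivWithinAt_const x _ (f a)) le_rfl hf hf' hf'_nonneg (right_mem_Icc.2 hab)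

theorem le_of_hasDerivWithinAt_Ici_of_eventually_le {f g : ℝ → ℝ} {f' g' x : ℝ}
    (hf : HasDerivWithinAt f f' (Ici x) x) (hg : HasDerivWithinAt g g' (Ici x) x)
    (hfg : f x = g x) (hle : ∀ᶠ y in 𝓝[>] x, f y ≤ g y) : f' ≤ g' := by
  rw [← hasDerivWithinAt_Ioi_iff_Ici, hasDerivWithinAt_iff_tendsto_slope' self_notMem_Ioi] at hf hg
  refine le_of_tendsto_of_tendsto hf hg ?_
  filter_upwards [hle, self_mem_nhdsWithin] with y hy hxy
  rw [slope_def_field, slope_def_field, hfg]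
  exact div_le_div_of_nonneg_right (by linarith) (sub_nonneg.2 (le_of_lt hxy))

section Lambda

variable {Φ : ℝ → ℝ} {q : ℝ}

theorem monotoneOn_mul_rpow_neg_of_le_mul_derivWithin (hconv : ConvexOn ℝ (Ioi 0) Φ)
    (hq : ∀ x, 0 < x → q * Φ x ≤ x * derivWithin Φ (Ici x) x) :
    MonotoneOn (fun x => Φ x * x ^ (-q)) (Ioi 0) := by
  intro a ha b _ hab
  have hpos : ∀ x ∈ Icc a b, 0 < x := fun x hx => lt_of_lt_of_le ha hx.1
  have hcont : ContinuousOn (fun x => Φ x * x ^ (-q)) (Icc a b) := by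
    refine ContinuousOn.mul ?_ fun x hx => ?_
    · refine hconv.continuousOn_interior.mono fun x hx => ?_
      rw [interior_Ioi]
      exact hpos x hx
    · exact (Real.continuousAt_rpow_const x (-q) (Or.inl (hpos x hx).ne')).continuousWithinAt
  refine le_of_hasDerivWithinAt_Ici_nonneg hab hcont
    (f' := fun x => derivWithin Φ (Ici x) x * x ^ (-q) + Φ x * (-q * x ^ (-q - 1)))
    (fun x hx => ?_) (fun x hx => ?_)
  · have hx := hpos x (Ico_subset_Icc_self hx)
    exact (hconv.hasDerivWithinAt_derivWithin_Ici (by rwa [interior_Ioi])).mul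
      (Real.hasDerivAt_rpow_const (Or.inl hx.ne')).hasDerivWithinAt
  · have hx := hpos x (Ico_subset_Icc_self hx)
    have hpow : x ^ (-q - 1) = x ^ (-q) / x := Real.rpow_sub_one hx.ne' (-q)
    have hxq : 0 ≤ x ^ (-q) := (Real.rpow_pos_of_pos hx _).le
    rw [hpow]
    have hscaled : 0 ≤ (x * derivWithin Φ (Ici x) x - q * Φ x) * x ^ (-q) / x :=
      div_nonneg (mul_nonneg (sub_nonneg.2 (hq x hx)) hxq) hx.le
    convert hscaled using 1
    field_simp
    ring

theorem apply_mul_le_rpow_mul_of_le_mul_derivWithin (hconv : ConvexOn ℝ (Ici 0) Φ)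
    (h0 : Φ 0 = 0) (hq : ∀ x, 0 < x → q * Φ x ≤ x * derivWithin Φ (Ici x) x)
    {t c : ℝ} (ht : 0 ≤ t) (hc : 0 < c) (hc1 : c ≤ 1) :
    Φ (c * t) ≤ c ^ q * Φ t := by
  rcases ht.eq_or_lt with rfl | ht
  · simp [h0]
  have hmono := monotoneOn_mul_rpow_neg_of_le_mul_derivWithin
    (hconv.subset Ioi_subset_Ici_self (convex_Ioi 0)) hq
  have hct : c * t ≤ t := mul_le_of_le_one_left ht.le hc1
  have h := hmono (mul_pos hc ht) ht hct
  simp only [Real.mul_rpow hc.le ht.le, Real.rpow_neg hc.le, Real.rpow_neg ht.le] at h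
  have hcq : 0 < c ^ q := Real.rpow_pos_of_pos hc q
  have htq : 0 < t ^ q := Real.rpow_pos_of_pos ht q
  rw [← mul_assoc, mul_le_mul_iff_left₀ (inv_pos.2 htq), mul_inv_le_iff₀ hcq] at h
  linarith

theorem mul_le_mul_derivWithin_of_apply_mul_le_rpow_mul (hconv : ConvexOn ℝ (Ioi 0) Φ)
    (hΛ : ∀ t, 0 < t → ∀ c, 0 < c → c ≤ 1 → Φ (c * t) ≤ c ^ q * Φ t) {t : ℝ} (ht : 0 < t) :
    q * Φ t ≤ t * derivWithin Φ (Ici t) t := by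
  set g : ℝ → ℝ := fun u => Φ t / t ^ q * u ^ q
  have htq : 0 < t ^ q := Real.rpow_pos_of_pos ht q
  have hg : HasDerivWithinAt g (Φ t / t ^ q * (q * t ^ (q - 1))) (Ici t) t :=
    ((Real.hasDerivAt_rpow_const (Or.inl ht.ne')).const_mul _).hasDerivWithinAt
  have hgt : g t = Φ t := div_mul_cancel₀ _ htq.ne'
  have hgΦ : ∀ᶠ u in 𝓝[>] t, g u ≤ Φ u := by
    filter_upwards [self_mem_nhdsWithin] with u (hu : t < u)
    have hu0 : 0 < u := ht.trans hu
    have h := hΛ u hu0 (t / u) (div_pos ht hu0) ((div_le_one hu0).2 hu.le)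
    rw [div_mul_cancel₀ _ hu0.ne', Real.div_rpow ht.le hu0.le] at h
    have huq : 0 < u ^ q := Real.rpow_pos_of_pos hu0 q
    show Φ t / t ^ q * u ^ q ≤ Φ u
    rw [div_mul_eq_mul_div, div_le_iff₀ htq]
    rw [div_mul_eq_mul_div, le_div_iff₀ huq] at h
    linarith
  have hD := le_of_hasDerivWithinAt_Ici_of_eventually_le hg
    (hconv.hasDerivWithinAt_derivWithin_Ici (by rwa [interior_Ioi])) hgt hgΦ
  calc q * Φ t = t * (Φ t / t ^ q * (q * t ^ (q - 1))) := by
        rw [Real.rpow_sub_one ht.ne']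
        field_simp
    _ ≤ t * derivWithin Φ (Ici t) t := mul_le_mul_of_nonneg_left hD ht.le

end Lambda

theorem qPhi_gt_one_iff_Lambda_general (Φ : ℝ → ℝ)
    (hconv : ConvexOn ℝ (Set.Ici 0) Φ) (h0 : Φ 0 = 0)
    (hpos : ∀ t, 0 < t → 0 < Φ t) :
    1 < sInf {r : ℝ | ∃ t : ℝ, 0 < t ∧ r = t * derivWithin Φ (Set.Ici t) t / Φ t} ↔
      ∃ p : ℝ, 1 < p ∧ ∀ t : ℝ, 0 ≤ t → ∀ c : ℝ, 0 < c → c ≤ 1 →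
        Φ (c * t) ≤ c ^ p * Φ t := by
  set S := {r : ℝ | ∃ t : ℝ, 0 < t ∧ r = t * derivWithin Φ (Set.Ici t) t / Φ t}
  constructor
  · intro hq
    -- an unbounded `S` would have the junk value `sInf S = 0`
    have hbdd : BddBelow S := by
      by_contra h
      rw [Real.sInf_of_not_bddBelow h] at hq
      norm_num at hq
    have hkey : ∀ x, 0 < x → sInf S * Φ x ≤ x * derivWithin Φ (Ici x) x := fun x hx =>
      (le_div_iff₀ (hpos x hx)).1 (csInf_le hbdd ⟨x, hx, rfl⟩)
    exact ⟨sInf S, hq, fun t ht c hc hc1 =>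
      apply_mul_le_rpow_mul_of_le_mul_derivWithin hconv h0 hkey ht hc hc1⟩
  · rintro ⟨p, hp, hΛ⟩
    refine hp.trans_le (le_csInf ⟨_, 1, one_pos, rfl⟩ ?_)
    rintro _ ⟨t, ht, rfl⟩
    rw [le_div_iff₀ (hpos t ht)]
    exact mul_le_mul_derivWithin_of_apply_mul_le_rpow_mul
      (hconv.subset Ioi_subset_Ici_self (convex_Ioi 0)) (fun t ht => hΛ t ht.le) ht

/-- For a Young function `Φ`, finite and nonzero outside the origin,
`q_Φ = inf_{t>0} t Φ'₊(t)/Φ(t) > 1` iff `Φ` satisfies the `Λ`-condition: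
there is `p > 1` with `Φ(ct) ≤ c^p Φ(t)` for all `t ≥ 0`, `c ∈ (0,1]`. -/
theorem qPhi_gt_one_iff_Lambda (Φ : ℝ → ℝ)
    (hconv : ConvexOn ℝ (Set.Ici 0) Φ) (h0 : Φ 0 = 0)
    (hnn : ∀ t, 0 ≤ t → 0 ≤ Φ t) (hlim : Tendsto Φ atTop atTop)
    (hpos : ∀ t, 0 < t → 0 < Φ t) :
    1 < sInf {r : ℝ | ∃ t : ℝ, 0 < t ∧ r = t * derivWithin Φ (Set.Ici t) t / Φ t} ↔
      ∃ p : ℝ, 1 < p ∧ ∀ t : ℝ, 0 ≤ t → ∀ c : ℝ, 0 < c → c ≤ 1 →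
        Φ (c * t) ≤ c ^ p * Φ t :=
  qPhi_gt_one_iff_Lambda_general Φ hconv h0 hpos
end

section
/- Let Φ be a Young function, finite-valued and nonzero outside the origin. Suppose there exist p, q > 1 and 0 < R₁ ≤ R₂ such that t ↦ Φ(t)/t^p is non-decreasing on (0,R₁) and t ↦ Φ(t)/t^q is non-decreasing on (R₂,∞). Then q_Φ = inf_{t>0} tΦ'₊(t)/Φ(t) > 1. -/
/-!
For convex `Φ`, `t Φ'₊(t) ≥ t (Φ(t) - Φ(s)) / (t - s)` whenever `0 ≤ s < t`. With `s = t/2` the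
growth condition (exponent `p` for small `t`, `q` for large `t`) gives `Φ(t/2) ≤ 2^{-p} Φ(t)`,
hence `t Φ'₊(t) ≥ 2 (1 - 2^{-p}) Φ(t)` with `2 (1 - 2^{-p}) > 1`. In between, the gap
`t Φ'₊(t) - Φ(t)` (minus the intercept of the supporting line at `t`) is non-decreasing, so it
stays above its positive value at `R₁/2`, while `Φ` stays below `Φ(2R₂)`.
-/

open Filter Set

theorem le_inv_two_rpow_mul_of_div_rpow_le {f : ℝ → ℝ} {t p : ℝ} (ht : 0 < t)
    (h : f (t / 2) / (t / 2) ^ p ≤ f t / t ^ p) : f (t / 2) ≤ (2 : ℝ)⁻¹ ^ p * f t := by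
  have htp : 0 < t ^ p := Real.rpow_pos_of_pos ht p
  have hhalf : (t / 2) ^ p = (2 : ℝ)⁻¹ ^ p * t ^ p := by
    rw [div_eq_inv_mul, Real.mul_rpow (by norm_num) ht.le]
  rw [div_le_div_iff₀ (Real.rpow_pos_of_pos (half_pos ht) p) htp, hhalf] at h
  exact le_of_mul_le_mul_right (by linarith) htp

theorem one_lt_two_mul_one_sub_inv_two_rpow {p : ℝ} (hp : 1 < p) :
    1 < 2 * (1 - (2 : ℝ)⁻¹ ^ p) := by
  have := Real.rpow_lt_rpow_of_exponent_gt (by norm_num : (0 : ℝ) < 2⁻¹) (by norm_num) hp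
  rw [Real.rpow_one] at this
  linarith

namespace ConvexOn

variable {S : Set ℝ} {f : ℝ → ℝ}

theorem slope_le_derivWithin_Ici (hf : ConvexOn ℝ S f) {x y : ℝ} (hx : x ∈ S)
    (hy : y ∈ interior S) (hxy : x < y) : slope f x y ≤ derivWithin f (Ici y) y := by
  rw [← derivWithin_Ioi_eq_Ici]
  exact (hf.slope_le_leftDeriv_of_mem_interior hx hy hxy).trans
    (hf.leftDeriv_le_rightDeriv_of_mem_interior hy)

theorem monotoneOn_Ici_zero (hf : ConvexOn ℝ (Ici 0) f) (hf0 : ∀ t, 0 < t → f 0 ≤ f t) :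
    MonotoneOn f (Ici 0) := by
  intro a ha b _ hab
  rcases (mem_Ici.1 ha).eq_or_lt with rfl | ha
  · rcases hab.eq_or_lt with rfl | hb
    exacts [le_rfl, hf0 b hb]
  rcases hab.eq_or_lt with rfl | hab
  · rfl
  have hadj := hf.slope_mono_adjacent self_mem_Ici (mem_Ici.2 (ha.trans hab).le) ha hab
  have hleft : 0 ≤ (f a - f 0) / (a - 0) := div_nonneg (sub_nonneg.2 (hf0 a ha)) (by linarith)
  have hright := hleft.trans hadj
  rw [le_div_iff₀ (sub_pos.2 hab)] at hright
  linarith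

theorem monotoneOn_mul_derivWithin_Ici_sub (hf : ConvexOn ℝ (Ici 0) f) :
    MonotoneOn (fun t ↦ t * derivWithin f (Ici t) t - f t) (Ioi 0) := by
  intro x hx y hy hxy
  rcases hxy.eq_or_lt with rfl | hxy
  · rfl
  have hx0 : 0 ≤ x := le_of_lt hx
  rw [← interior_Ici] at hx hy
  have hD : derivWithin f (Ici x) x ≤ derivWithin f (Ici y) y := by
    simpa only [derivWithin_Ioi_eq_Ici] using hf.monotoneOn_rightDeriv hx hy hxy.le
  have hslope : f y - f x ≤ (y - x) * derivWithin f (Ici y) y := by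
    have := hf.slope_le_derivWithin_Ici (interior_subset hx) hy hxy
    rwa [slope_def_field, div_le_iff₀ (sub_pos.2 hxy), mul_comm] at this
  nlinarith [mul_le_mul_of_nonneg_left hD hx0]

theorem two_mul_sub_le_mul_derivWithin_Ici (hf : ConvexOn ℝ (Ici 0) f) {t : ℝ} (ht : 0 < t) :
    2 * (f t - f (t / 2)) ≤ t * derivWithin f (Ici t) t := by
  have h := hf.slope_le_derivWithin_Ici (mem_Ici.2 (half_pos ht).le)
    (interior_Ici (a := (0 : ℝ)) ▸ ht) (half_lt_self ht)
  rw [slope_def_field, sub_half, div_le_iff₀ (half_pos ht)] at h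
  linarith

theorem two_mul_one_sub_inv_two_rpow_mul_le_mul_derivWithin_Ici (hf : ConvexOn ℝ (Ici 0) f)
    {t p : ℝ} (ht : 0 < t) (h : f (t / 2) / (t / 2) ^ p ≤ f t / t ^ p) :
    2 * (1 - (2 : ℝ)⁻¹ ^ p) * f t ≤ t * derivWithin f (Ici t) t := by
  have hhalf := le_inv_two_rpow_mul_of_div_rpow_le ht h
  have hderiv := hf.two_mul_sub_le_mul_derivWithin_Ici ht
  linarith

theorem one_add_div_mul_le_mul_derivWithin_Ici (hf : ConvexOn ℝ (Ici 0) f) {s t T : ℝ}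
    (hs : 0 < s) (hst : s ≤ t) (hT : 0 < f T) (hftT : f t ≤ f T)
    (hgap : 0 ≤ s * derivWithin f (Ici s) s - f s) :
    (1 + (s * derivWithin f (Ici s) s - f s) / f T) * f t ≤ t * derivWithin f (Ici t) t := by
  set δ := s * derivWithin f (Ici s) s - f s
  have hgap_t : δ ≤ t * derivWithin f (Ici t) t - f t :=
    hf.monotoneOn_mul_derivWithin_Ici_sub hs (hs.trans_le hst) hst
  have hδ : δ / f T * f t ≤ δ :=
    calc δ / f T * f t ≤ δ / f T * f T := mul_le_mul_of_nonneg_left hftT (div_nonneg hgap hT.le)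
      _ = δ := div_mul_cancel₀ δ hT.ne'
  linarith

end ConvexOn

theorem le_sInf_div_of_mul_le {Φ g : ℝ → ℝ} {c : ℝ} (hpos : ∀ t, 0 < t → 0 < Φ t)
    (h : ∀ t, 0 < t → c * Φ t ≤ g t) : c ≤ sInf {r : ℝ | ∃ t : ℝ, 0 < t ∧ r = g t / Φ t} := by
  refine le_csInf ⟨g 1 / Φ 1, 1, one_pos, rfl⟩ ?_
  rintro _ ⟨t, ht, rfl⟩
  exact (le_div_iff₀ (hpos t ht)).2 (h t ht)

theorem qPhi_gt_one_of_local_monotone_general (Φ : ℝ → ℝ)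
    (hconv : ConvexOn ℝ (Set.Ici 0) Φ) (h0 : Φ 0 = 0)
    (hpos : ∀ t, 0 < t → 0 < Φ t)
    (p q R₁ R₂ : ℝ) (hp : 1 < p) (hq : 1 < q) (hR₁ : 0 < R₁) (hR : R₁ ≤ R₂)
    (hmono₀ : ∀ t₁ t₂ : ℝ, 0 < t₁ → t₁ ≤ t₂ → t₂ < R₁ →
      Φ t₁ / t₁ ^ p ≤ Φ t₂ / t₂ ^ p)
    (hmonoInf : ∀ t₁ t₂ : ℝ, R₂ < t₁ → t₁ ≤ t₂ →
      Φ t₁ / t₁ ^ q ≤ Φ t₂ / t₂ ^ q) :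
    1 < sInf {r : ℝ | ∃ t : ℝ, 0 < t ∧ r = t * derivWithin Φ (Set.Ici t) t / Φ t} := by
  have hmono : MonotoneOn Φ (Ici 0) :=
    hconv.monotoneOn_Ici_zero fun t ht ↦ h0.trans_le (hpos t ht).le
  have hsmall : ∀ t, 0 < t → t < R₁ →
      2 * (1 - (2 : ℝ)⁻¹ ^ p) * Φ t ≤ t * derivWithin Φ (Ici t) t := fun t ht htR ↦
    hconv.two_mul_one_sub_inv_two_rpow_mul_le_mul_derivWithin_Ici ht
      (hmono₀ _ _ (half_pos ht) (half_le_self ht.le) htR)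
  have hlarge : ∀ t, 2 * R₂ < t →
      2 * (1 - (2 : ℝ)⁻¹ ^ q) * Φ t ≤ t * derivWithin Φ (Ici t) t := fun t ht ↦
    hconv.two_mul_one_sub_inv_two_rpow_mul_le_mul_derivWithin_Ici (by linarith)
      (hmonoInf _ _ (by linarith) (by linarith))
  have hs : 0 < R₁ / 2 := half_pos hR₁
  have hgap : 0 < R₁ / 2 * derivWithin Φ (Ici (R₁ / 2)) (R₁ / 2) - Φ (R₁ / 2) := by
    nlinarith [hsmall _ hs (half_lt_self hR₁), one_lt_two_mul_one_sub_inv_two_rpow hp, hpos _ hs]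
  have hT : 0 < Φ (2 * R₂) := hpos _ (by linarith)
  set cₚ := 2 * (1 - (2 : ℝ)⁻¹ ^ p)
  set c_q := 2 * (1 - (2 : ℝ)⁻¹ ^ q)
  set cₘ := 1 + (R₁ / 2 * derivWithin Φ (Ici (R₁ / 2)) (R₁ / 2) - Φ (R₁ / 2)) / Φ (2 * R₂)
  have hc : 1 < min (min cₚ c_q) cₘ :=
    lt_min (lt_min (one_lt_two_mul_one_sub_inv_two_rpow hp)
      (one_lt_two_mul_one_sub_inv_two_rpow hq)) (lt_add_of_pos_right _ (div_pos hgap hT))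
  refine hc.trans_le (le_sInf_div_of_mul_le hpos fun t ht ↦ ?_)
  have hΦt := (hpos t ht).le
  rcases lt_or_ge t R₁ with htR₁ | htR₁
  · exact (mul_le_mul_of_nonneg_right ((min_le_left _ _).trans (min_le_left _ _)) hΦt).trans
      (hsmall t ht htR₁)
  rcases le_or_gt t (2 * R₂) with htR₂ | htR₂
  · have hΦle : Φ t ≤ Φ (2 * R₂) := hmono ht.le (by simp only [mem_Ici]; linarith) htR₂
    exact (mul_le_mul_of_nonneg_right (min_le_right _ _) hΦt).trans
      (hconv.one_add_div_mul_le_mul_derivWithin_Ici hs (by linarith) hT hΦle hgap.le)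
  · exact (mul_le_mul_of_nonneg_right ((min_le_left _ _).trans (min_le_right _ _)) hΦt).trans
      (hlarge t htR₂)

/-- For a Young function `Φ`, finite and nonzero outside the origin:
if there are `p, q > 1` and `0 < R₁ ≤ R₂` such that `t ↦ Φ(t)/t^p` is
non-decreasing on `(0,R₁)` and `t ↦ Φ(t)/t^q` is non-decreasing on `(R₂,∞)`,
then `q_Φ = inf_{t>0} t Φ'₊(t)/Φ(t) > 1`. -/
theorem qPhi_gt_one_of_local_monotone (Φ : ℝ → ℝ)
    (hconv : ConvexOn ℝ (Set.Ici 0) Φ) (h0 : Φ 0 = 0)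
    (hnn : ∀ t, 0 ≤ t → 0 ≤ Φ t) (hlim : Tendsto Φ atTop atTop)
    (hpos : ∀ t, 0 < t → 0 < Φ t)
    (p q R₁ R₂ : ℝ) (hp : 1 < p) (hq : 1 < q) (hR₁ : 0 < R₁) (hR : R₁ ≤ R₂)
    (hmono₀ : ∀ t₁ t₂ : ℝ, 0 < t₁ → t₁ ≤ t₂ → t₂ < R₁ →
      Φ t₁ / t₁ ^ p ≤ Φ t₂ / t₂ ^ p)
    (hmonoInf : ∀ t₁ t₂ : ℝ, R₂ < t₁ → t₁ ≤ t₂ →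
      Φ t₁ / t₁ ^ q ≤ Φ t₂ / t₂ ^ q) :
    1 < sInf {r : ℝ | ∃ t : ℝ, 0 < t ∧ r = t * derivWithin Φ (Set.Ici t) t / Φ t} :=
  qPhi_gt_one_of_local_monotone_general Φ hconv h0 hpos p q R₁ R₂ hp hq hR₁ hR hmono₀ hmonoInf
end

section
/- Let Φ be a finite-valued Young function, nonzero outside the origin, with q_Φ > 1. Then the function Ψ(t) = ∫₀ᵗ Φ(t−s)·e^{−s} ds satisfies Ψ(t) ≤ Φ(t) for all t ≥ 0, and Φ₁ := Φ + Ψ is a strictly convex Young function equivalent to Φ. -/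
/-!
Extend `Φ` by `0` to the negative axis; the extension `Φ₀` is monotone and convex on `ℝ`, and
`Ψ t = ∫₀ᵀ Φ₀(t - s) e^{-s} ds` for every `T ≥ t`. Hence on `[0, T]` the function `Ψ` is an average
of the convex translates `Φ₀(· - s)`, and it is strictly convex: for `x < z < y` and `s ∈ (z, y)`
the translate vanishes at `x` and `z` but not at `y`. Monotonicity gives
`Ψ t ≤ Φ t (1 - e^{-t}) ≤ Φ t`, so `Φ ≤ Φ + Ψ ≤ 2 Φ`.
-/

open Filter Set intervalIntegral MeasureTheory Real

theorem ConvexOn.monotoneOn_Ici_of_isMinOn {f : ℝ → ℝ} {a : ℝ} (hf : ConvexOn ℝ (Ici a) f)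
    (hmin : IsMinOn f (Ici a) a) : MonotoneOn f (Ici a) := by
  intro p hp q hq hpq
  rcases hpq.eq_or_lt with rfl | hpq
  · rfl
  rcases (mem_Ici.1 hp).eq_or_lt with rfl | hap
  · exact hmin hq
  refine hf.le_right_of_left_le self_mem_Ici hq ?_ (hmin hp)
  rw [openSegment_eq_Ioo (hap.trans hpq)]
  exact ⟨hap, hpq⟩

section ExtendByZero

variable {Φ : ℝ → ℝ}

theorem MonotoneOn.comp_max_zero (hmono : MonotoneOn Φ (Ici 0)) :
    Monotone fun t => Φ (max t 0) := fun _ _ hst =>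
  hmono (mem_Ici.2 (le_max_right _ _)) (mem_Ici.2 (le_max_right _ _)) (max_le_max_right 0 hst)

theorem ConvexOn.comp_max_zero (hconv : ConvexOn ℝ (Ici 0) Φ) (hmono : MonotoneOn Φ (Ici 0)) :
    ConvexOn ℝ univ fun t => Φ (max t 0) := by
  have hrange : (fun t : ℝ => max t 0) '' univ = Ici 0 := by
    ext t
    refine ⟨fun ⟨u, _, hu⟩ => hu ▸ le_max_right u 0, fun ht => ⟨t, trivial, max_eq_left ht⟩⟩
  have hmax : ConvexOn ℝ univ fun t : ℝ => max t 0 :=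
    (convexOn_id convex_univ).sup (convexOn_const 0 convex_univ)
  rw [← hrange] at hconv hmono
  exact hconv.comp hmax hmono

end ExtendByZero

noncomputable def expConvolution (g : ℝ → ℝ) (t : ℝ) : ℝ :=
  ∫ s in (0 : ℝ)..t, g (t - s) * exp (-s)

section ExpConvolution

variable {g : ℝ → ℝ}

theorem expConvolution_zero (g : ℝ → ℝ) : expConvolution g 0 = 0 :=
  integral_same

theorem expConvolution_nonneg (hg : ∀ t, 0 ≤ t → 0 ≤ g t) {t : ℝ} (ht : 0 ≤ t) :
    0 ≤ expConvolution g t :=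
  integral_nonneg ht fun s hs => mul_nonneg (hg _ (by linarith [hs.2])) (exp_nonneg _)

theorem expConvolution_congr {g' : ℝ → ℝ} (hgg' : EqOn g g' (Ici 0)) :
    EqOn (expConvolution g) (expConvolution g') (Ici 0) := fun t ht =>
  integral_congr fun s hs => by
    rw [uIcc_of_le (mem_Ici.1 ht)] at hs
    rw [hgg' (mem_Ici.2 (sub_nonneg.2 hs.2))]

theorem Monotone.intervalIntegrable_comp_sub_mul_exp_neg (hg : Monotone g) (t a b : ℝ) :
    IntervalIntegrable (fun s => g (t - s) * exp (-s)) volume a b :=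
  ((hg.comp_antitone fun _ _ huv => sub_le_sub_left huv t).antitoneOn _).intervalIntegrable
    |>.mul_continuousOn (by fun_prop)

theorem Monotone.expConvolution_le (hg : Monotone g) {t : ℝ} (ht : 0 ≤ t) (hgt : 0 ≤ g t) :
    expConvolution g t ≤ g t :=
  calc expConvolution g t ≤ ∫ s in (0 : ℝ)..t, g t * exp (-s) :=
        integral_mono_on ht (hg.intervalIntegrable_comp_sub_mul_exp_neg t 0 t)
          (Continuous.intervalIntegrable (by fun_prop) _ _)
          fun s hs => mul_le_mul_of_nonneg_right (hg (by linarith [hs.1])) (exp_nonneg _)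
    _ = g t * (1 - exp (-t)) := by
        rw [intervalIntegral.integral_const_mul, integral_comp_neg (fun s => exp s), integral_exp,
          neg_zero, exp_zero]
    _ ≤ g t := mul_le_of_le_one_right hgt (by linarith [exp_nonneg (-t)])

theorem Monotone.expConvolution_eq_integral_of_le (hg : Monotone g) (hg0 : ∀ t ≤ 0, g t = 0)
    {t T : ℝ} (htT : t ≤ T) :
    expConvolution g t = ∫ s in (0 : ℝ)..T, g (t - s) * exp (-s) := by
  have htail : ∫ s in t..T, g (t - s) * exp (-s) = 0 := by
    refine (integral_congr fun s hs => ?_).trans integral_zero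
    rw [uIcc_of_le htT] at hs
    simp [hg0 _ (sub_nonpos.2 hs.1)]
  rw [← integral_add_adjacent_intervals (hg.intervalIntegrable_comp_sub_mul_exp_neg t 0 t)
    (hg.intervalIntegrable_comp_sub_mul_exp_neg t t T), htail, add_zero, expConvolution]

theorem Monotone.strictConvexOn_expConvolution (hg : Monotone g) (hconv : ConvexOn ℝ univ g)
    (hg0 : ∀ t ≤ 0, g t = 0) (hgpos : ∀ t, 0 < t → 0 < g t) :
    StrictConvexOn ℝ (Ici 0) (expConvolution g) := by
  refine LinearOrder.strictConvexOn_of_lt (convex_Ici 0) fun x hx y hy hxy a b ha hb hab => ?_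
  have hz : a • x + b • y ∈ Ioo x y := openSegment_eq_Ioo hxy ▸ ⟨a, b, ha, hb, hab, rfl⟩
  set z := a • x + b • y
  have hint := hg.intervalIntegrable_comp_sub_mul_exp_neg
  have hpointwise (s : ℝ) : g (z - s) * exp (-s) ≤
      a * (g (x - s) * exp (-s)) + b * (g (y - s) * exp (-s)) := by
    have hzs : z - s = a • (x - s) + b • (y - s) := by
      simp only [z, smul_eq_mul]; linear_combination s * hab
    have := hconv.2 (mem_univ (x - s)) (mem_univ (y - s)) ha.le hb.le hab
    rw [← hzs, smul_eq_mul, smul_eq_mul] at this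
    nlinarith [exp_pos (-s)]
  have hstrict : ∀ s ∈ Ioo z y, g (z - s) * exp (-s) <
      a * (g (x - s) * exp (-s)) + b * (g (y - s) * exp (-s)) := by
    intro s hs
    rw [hg0 (z - s) (by linarith [hs.1]), hg0 (x - s) (by linarith [hz.1, hs.1])]
    have := hgpos _ (sub_pos.2 hs.2)
    simp only [zero_mul, mul_zero, zero_add]
    positivity
  rw [hg.expConvolution_eq_integral_of_le hg0 hxy.le,
    hg.expConvolution_eq_integral_of_le hg0 (le_refl y),
    hg.expConvolution_eq_integral_of_le hg0 hz.2.le,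
    smul_eq_mul, smul_eq_mul, ← intervalIntegral.integral_const_mul,
    ← intervalIntegral.integral_const_mul,
    ← integral_add ((hint x 0 y).const_mul a) ((hint y 0 y).const_mul b)]
  refine integral_lt_integral_of_ae_le_of_measure_setOfPred_lt_ne_zero hy (hint z 0 y)
    (((hint x 0 y).const_mul a).add ((hint y 0 y).const_mul b))
    (ae_of_all _ hpointwise) fun hnull => ?_
  rw [Measure.restrict_apply' measurableSet_Ioc] at hnull
  have hsub : Ioo z y ⊆ {s | _} ∩ Ioc 0 y := fun s hs =>
    ⟨hstrict s hs, (mem_Ici.1 hx).trans_lt (hz.1.trans hs.1), hs.2.le⟩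
  have := measure_mono_null hsub hnull
  simp only [Real.volume_Ioo, ENNReal.ofReal_eq_zero, sub_nonpos] at this
  exact this.not_gt hz.2 |>.elim

end ExpConvolution

theorem strictly_convex_equivalent_general (Φ : ℝ → ℝ)
    (hconv : ConvexOn ℝ (Set.Ici 0) Φ) (h0 : Φ 0 = 0)
    (hnn : ∀ t, 0 ≤ t → 0 ≤ Φ t) (hlim : Tendsto Φ atTop atTop)
    (hpos : ∀ t, 0 < t → 0 < Φ t)
    (Ψ : ℝ → ℝ) (hΨ : ∀ t : ℝ, Ψ t = ∫ s in (0 : ℝ)..t, Φ (t - s) * Real.exp (-s)) :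
    (∀ t, 0 ≤ t → Ψ t ≤ Φ t) ∧
    StrictConvexOn ℝ (Set.Ici 0) (fun t => Φ t + Ψ t) ∧
    (fun t => Φ t + Ψ t) 0 = 0 ∧
    Tendsto (fun t => Φ t + Ψ t) atTop atTop ∧
    (∃ C : ℝ, 1 ≤ C ∧ ∀ t, 0 ≤ t →
      C⁻¹ * Φ t ≤ Φ t + Ψ t ∧ Φ t + Ψ t ≤ C * Φ t) := by
  have hmono : MonotoneOn Φ (Ici 0) :=
    hconv.monotoneOn_Ici_of_isMinOn <| isMinOn_iff.2 fun t ht => h0.symm ▸ hnn t ht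
  have hext : EqOn (fun t => Φ (max t 0)) Φ (Ici 0) := fun t ht => by
    simp only [max_eq_left (mem_Ici.1 ht)]
  have hΨ_eq : Ψ = expConvolution Φ := funext hΨ
  have hΨ_ext : EqOn (expConvolution fun t => Φ (max t 0)) Ψ (Ici 0) :=
    hΨ_eq ▸ expConvolution_congr hext
  have hΨ_le (t : ℝ) (ht : 0 ≤ t) : Ψ t ≤ Φ t := by
    rw [← hΨ_ext ht, ← hext ht]
    exact hmono.comp_max_zero.expConvolution_le ht (hnn _ (le_max_right t 0))
  have hΨ_nonneg (t : ℝ) (ht : 0 ≤ t) : 0 ≤ Ψ t := hΨ_eq ▸ expConvolution_nonneg hnn ht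
  have hΨ_strict : StrictConvexOn ℝ (Ici 0) Ψ :=
    (hmono.comp_max_zero.strictConvexOn_expConvolution (hconv.comp_max_zero hmono)
      (fun t ht => by rw [max_eq_right ht, h0])
      (fun t ht => by rw [max_eq_left ht.le]; exact hpos t ht)).congr hΨ_ext
  refine ⟨hΨ_le, hconv.add_strictConvexOn hΨ_strict,
    by simp only [h0, hΨ_eq, expConvolution_zero, add_zero], tendsto_atTop_mono' _ ?_ hlim,
    2, one_le_two, fun t ht => ⟨?_, by linarith [hΨ_le t ht]⟩⟩
  · filter_upwards [eventually_ge_atTop 0] with t ht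
    linarith [hΨ_nonneg t ht]
  · linarith [hnn t ht, hΨ_nonneg t ht]

/-- If `Φ` is a finite Young function, nonzero outside the origin, with
`q_Φ > 1`, then `Ψ(t) = ∫₀ᵗ Φ(t-s) e^{-s} ds` satisfies `Ψ ≤ Φ`, and
`Φ₁ = Φ + Ψ` is a strictly convex Young function equivalent to `Φ`. -/
theorem strictly_convex_equivalent (Φ : ℝ → ℝ)
    (hconv : ConvexOn ℝ (Set.Ici 0) Φ) (h0 : Φ 0 = 0)
    (hnn : ∀ t, 0 ≤ t → 0 ≤ Φ t) (hlim : Tendsto Φ atTop atTop)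
    (hpos : ∀ t, 0 < t → 0 < Φ t)
    (hq : 1 < sInf {r : ℝ | ∃ t : ℝ, 0 < t ∧ r = t * derivWithin Φ (Set.Ici t) t / Φ t})
    (Ψ : ℝ → ℝ) (hΨ : ∀ t : ℝ, Ψ t = ∫ s in (0 : ℝ)..t, Φ (t - s) * Real.exp (-s)) :
    (∀ t, 0 ≤ t → Ψ t ≤ Φ t) ∧
    StrictConvexOn ℝ (Set.Ici 0) (fun t => Φ t + Ψ t) ∧
    (fun t => Φ t + Ψ t) 0 = 0 ∧
    Tendsto (fun t => Φ t + Ψ t) atTop atTop ∧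
    (∃ C : ℝ, 1 ≤ C ∧ ∀ t, 0 ≤ t →
      C⁻¹ * Φ t ≤ Φ t + Ψ t ∧ Φ t + Ψ t ≤ C * Φ t) :=
  strictly_convex_equivalent_general Φ hconv h0 hnn hlim hpos Ψ hΨ
end

section
/- There exists a Young function Φ with q_Φ > 1 which is not strictly convex. Specifically, Φ defined by Φ(t)=2t² for t ≤ 1, Φ(t)=4t−2 for 1 ≤ t ≤ 2, Φ(t)=t²+2 for t ≥ 2 is a Young function, fails to be strictly convex, and satisfies q_Φ = inf_{t>0} tΦ'(t)/Φ(t) = 4/3 > 1. -/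
open Filter Set

/-!
`Φ` is `C¹` with derivative `4t`, `4`, `2t` on the three pieces, which is nondecreasing, so `Φ`
is convex; it is affine on `[1, 2]`, so not strictly convex. The ratio `tΦ'(t)/Φ(t)` is `2` on
`(0, 1]`, `4t/(4t - 2)` (decreasing) on `[1, 2]` and `2t²/(t² + 2)` (increasing) on `[2, ∞)`,
so its infimum `4/3` is attained at `t = 2`.
-/

section Gluing

variable {E : Type*} [NormedAddCommGroup E] [NormedSpace ℝ E]

theorem hasDerivAt_ite_le {f g f' g' : ℝ → E} {a : ℝ}
    (hf : ∀ x, HasDerivAt f (f' x) x) (hg : ∀ x, HasDerivAt g (g' x) x)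
    (hfg : f a = g a) (hfg' : f' a = g' a) (x : ℝ) :
    HasDerivAt (fun t => if t ≤ a then f t else g t) (if x ≤ a then f' x else g' x) x := by
  rcases lt_trichotomy x a with hx | rfl | hx
  · rw [if_pos hx.le]
    refine (hf x).congr_of_eventuallyEq ?_
    filter_upwards [Iio_mem_nhds hx] with t ht
    rw [if_pos (le_of_lt ht)]
  · rw [if_pos le_rfl]
    have hleft : HasDerivWithinAt (fun t => if t ≤ x then f t else g t) (f' x) (Iic x) x :=
      (hf x).hasDerivWithinAt.congr (fun t ht => if_pos ht) (if_pos le_rfl)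
    have hright : HasDerivWithinAt (fun t => if t ≤ x then f t else g t) (f' x) (Ici x) x := by
      rw [hfg']
      refine (hg x).hasDerivWithinAt.congr (fun t ht => ?_) (by rw [if_pos le_rfl, hfg])
      rcases (mem_Ici.1 ht).eq_or_lt with rfl | ht
      · rw [if_pos le_rfl, hfg]
      · rw [if_neg (not_le.2 ht)]
    simpa [Iic_union_Ici] using hleft.union hright
  · rw [if_neg (not_le.2 hx)]
    refine (hg x).congr_of_eventuallyEq ?_
    filter_upwards [Ioi_mem_nhds hx] with t ht
    rw [if_neg (not_le.2 ht)]

end Gluing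

noncomputable def youngExample (t : ℝ) : ℝ :=
  if t ≤ 1 then 2 * t ^ 2 else if t ≤ 2 then 4 * t - 2 else t ^ 2 + 2

noncomputable def youngExampleDeriv (t : ℝ) : ℝ :=
  if t ≤ 1 then 4 * t else if t ≤ 2 then 4 else 2 * t

theorem hasDerivAt_youngExample (x : ℝ) : HasDerivAt youngExample (youngExampleDeriv x) x := by
  have hquad₁ (x : ℝ) : HasDerivAt (fun t : ℝ => 2 * t ^ 2) (4 * x) x := by
    simpa [mul_assoc] using (hasDerivAt_pow 2 x).const_mul (2 : ℝ) |>.congr_deriv (by ring)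
  have hlin (x : ℝ) : HasDerivAt (fun t : ℝ => 4 * t - 2) 4 x := by
    simpa using ((hasDerivAt_id x).const_mul (4 : ℝ)).sub_const 2
  have hquad₂ (x : ℝ) : HasDerivAt (fun t : ℝ => t ^ 2 + 2) (2 * x) x := by
    simpa using (hasDerivAt_pow 2 x).add_const (2 : ℝ)
  have htail := hasDerivAt_ite_le hlin hquad₂ (a := 2) (by norm_num) (by norm_num)
  exact hasDerivAt_ite_le hquad₁ htail (by norm_num) (by norm_num) x

theorem differentiable_youngExample : Differentiable ℝ youngExample :=
  fun x => (hasDerivAt_youngExample x).differentiableAt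

theorem deriv_youngExample : deriv youngExample = youngExampleDeriv :=
  funext fun x => (hasDerivAt_youngExample x).deriv

theorem monotone_youngExampleDeriv : Monotone youngExampleDeriv := by
  intro a b hab
  unfold youngExampleDeriv
  split_ifs <;> linarith

theorem convexOn_youngExample : ConvexOn ℝ univ youngExample :=
  Monotone.convexOn_univ_of_deriv differentiable_youngExample
    (deriv_youngExample ▸ monotone_youngExampleDeriv)

theorem youngExample_not_strictConvexOn : ¬ StrictConvexOn ℝ (Ici 0) youngExample := by
  intro h
  have := h.2 (x := 1) (y := 2) (by norm_num) (by norm_num) (by norm_num)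
    (by norm_num : (0 : ℝ) < 1 / 2) (by norm_num : (0 : ℝ) < 1 / 2) (by norm_num)
  norm_num [youngExample] at this

theorem tendsto_youngExample_atTop : Tendsto youngExample atTop atTop := by
  refine tendsto_atTop_mono' atTop ?_ tendsto_id
  filter_upwards [eventually_ge_atTop (3 : ℝ)] with x hx
  rw [id, youngExample, if_neg (by linarith), if_neg (by linarith)]
  nlinarith

theorem four_thirds_le_mul_deriv_div_youngExample {t : ℝ} (ht : 0 < t) :
    4 / 3 ≤ t * youngExampleDeriv t / youngExample t := by
  unfold youngExample youngExampleDeriv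
  split_ifs with h1 h2
  · rw [le_div_iff₀ (by positivity)]
    nlinarith
  · rw [le_div_iff₀ (by linarith)]
    nlinarith
  · rw [le_div_iff₀ (by positivity)]
    nlinarith

theorem sInf_mul_derivWithin_div_youngExample :
    sInf {r : ℝ | ∃ t : ℝ, 0 < t ∧ r = t * derivWithin youngExample (Ici t) t / youngExample t}
      = 4 / 3 := by
  have hderivWithin (t : ℝ) : derivWithin youngExample (Ici t) t = youngExampleDeriv t :=
    (hasDerivAt_youngExample t).hasDerivWithinAt.derivWithin (uniqueDiffOn_Ici t t self_mem_Ici)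
  refine IsLeast.csInf_eq ⟨⟨2, two_pos, ?_⟩, ?_⟩
  · norm_num [hderivWithin, youngExample, youngExampleDeriv]
  · rintro r ⟨t, ht, rfl⟩
    rw [hderivWithin]
    exact four_thirds_le_mul_deriv_div_youngExample ht

/-- The Young function `Φ(t) = 2t²` on `[0,1]`, `4t-2` on `[1,2]`, `t²+2` on
`[2,∞)` is convex but not strictly convex, and `q_Φ = 4/3 > 1`. -/
theorem exists_not_strictly_convex_qPhi_gt_one
    (Φ : ℝ → ℝ)
    (hΦ : ∀ t : ℝ, Φ t = if t ≤ 1 then 2 * t ^ 2 else if t ≤ 2 then 4 * t - 2 else t ^ 2 + 2) :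
    ConvexOn ℝ (Set.Ici 0) Φ ∧ Φ 0 = 0 ∧ Tendsto Φ atTop atTop ∧
    ¬ StrictConvexOn ℝ (Set.Ici 0) Φ ∧
    sInf {r : ℝ | ∃ t : ℝ, 0 < t ∧ r = t * derivWithin Φ (Set.Ici t) t / Φ t} = 4 / 3 ∧
    (1 : ℝ) < 4 / 3 := by
  obtain rfl : Φ = youngExample := funext hΦ
  exact ⟨convexOn_youngExample.subset (subset_univ _) (convex_Ici 0),
    by norm_num [youngExample], tendsto_youngExample_atTop, youngExample_not_strictConvexOn,
    sInf_mul_derivWithin_div_youngExample, by norm_num⟩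
end

section
/- Let Φ be a Young function, finite-valued and nonzero outside the origin, with q_Φ > 1. Then there exists p > 1 such that Φ(t)/t^p is non-decreasing, lim_{t→0+} Φ(t)/t^p = 0, and lim_{t→∞} Φ(t)/t^p = ∞. -/
/-!
Write `q = q_Φ`. For `t > 0` the definition of `q` as an infimum gives `q Φ(t) ≤ t Φ'₊(t)`, so the
right derivative of `log Φ(t) - e log t` is nonnegative whenever `e ≤ q`; as `Φ` is continuous on
`(0, ∞)` by convexity, `Φ(t)/t^e` is non-decreasing there. Take `p = (1 + q)/2`. Then
`Φ(t)/t^p = (Φ(t)/t^q) t^(q-p)` with `Φ(t)/t^q` non-decreasing and `q - p > 0`, which bounds it above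
by `Φ(1) t^(q-p)` on `(0, 1]` and below by the same function on `[1, ∞)`.
-/

open Filter Set Topology

theorem monotoneOn_of_hasDerivWithinAt_Ici_nonneg_s17 {D : Set ℝ} (hD : D.OrdConnected)
    {g g' : ℝ → ℝ} (hg : ContinuousOn g D)
    (hg' : ∀ x ∈ D, HasDerivWithinAt g (g' x) (Ici x) x) (hnonneg : ∀ x ∈ D, 0 ≤ g' x) :
    MonotoneOn g D := by
  intro a ha b hb hab
  have hsub : Icc a b ⊆ D := hD.out ha hb
  exact image_le_of_deriv_right_le_deriv_boundary continuousOn_const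
    (fun x _ => hasDerivWithinAt_const x _ _) le_rfl (hg.mono hsub)
    (fun x hx => hg' x (hsub (Ico_subset_Icc_self hx)))
    (fun x hx => hnonneg x (hsub (Ico_subset_Icc_self hx))) (right_mem_Icc.2 hab)

theorem monotoneOn_div_rpow_of_mul_le_mul_deriv {f f' : ℝ → ℝ} {e : ℝ}
    (hcont : ContinuousOn f (Ioi 0)) (hderiv : ∀ t ∈ Ioi 0, HasDerivWithinAt f (f' t) (Ici t) t)
    (hpos : ∀ t ∈ Ioi 0, 0 < f t) (hf' : ∀ t ∈ Ioi 0, e * f t ≤ t * f' t) :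
    MonotoneOn (fun t => f t / t ^ e) (Ioi 0) := by
  have hlog : MonotoneOn (fun t => Real.log (f t) - e * Real.log t) (Ioi 0) := by
    refine monotoneOn_of_hasDerivWithinAt_Ici_nonneg_s17 ordConnected_Ioi
      (g' := fun t => f' t / f t - e * t⁻¹) ?_ (fun t ht => ?_) (fun t ht => ?_)
    · exact (hcont.log fun t ht => (hpos t ht).ne').sub
        (continuousOn_const.mul (Real.continuousOn_log.mono fun t ht => (ne_of_gt ht)))
    · exact ((hderiv t ht).log (hpos t ht).ne').sub
        ((Real.hasDerivAt_log (ne_of_gt ht)).hasDerivWithinAt.const_mul e)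
    · have ht : (0 : ℝ) < t := ht
      rw [sub_nonneg, ← div_eq_mul_inv, div_le_div_iff₀ ht (hpos t ht)]
      linarith [hf' t ht]
  intro a ha b hb hab
  have hquot_pos : ∀ t ∈ Ioi (0 : ℝ), 0 < f t / t ^ e := fun t ht =>
    div_pos (hpos t ht) (Real.rpow_pos_of_pos ht e)
  rw [← Real.log_le_log_iff (hquot_pos a ha) (hquot_pos b hb),
    Real.log_div (hpos a ha).ne' (Real.rpow_pos_of_pos ha e).ne',
    Real.log_div (hpos b hb).ne' (Real.rpow_pos_of_pos hb e).ne',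
    Real.log_rpow ha, Real.log_rpow hb]
  exact hlog ha hb hab

theorem div_rpow_eq_div_rpow_mul_rpow_sub (f : ℝ → ℝ) (p q : ℝ) {t : ℝ} (ht : 0 < t) :
    f t / t ^ p = f t / t ^ q * t ^ (q - p) := by
  rw [Real.rpow_sub ht]
  field_simp

theorem tendsto_div_rpow_nhdsGT_zero_of_monotoneOn {f : ℝ → ℝ} {p q : ℝ} (hpq : p < q)
    (hmono : MonotoneOn (fun t => f t / t ^ q) (Ioi 0)) (hnonneg : ∀ t ∈ Ioi 0, 0 ≤ f t) :
    Tendsto (fun t => f t / t ^ p) (𝓝[>] 0) (𝓝 0) := by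
  have hbound : Tendsto (fun t : ℝ => f 1 * t ^ (q - p)) (𝓝[>] 0) (𝓝 0) := by
    have h := ((Real.continuousAt_rpow_const 0 (q - p) (Or.inr (sub_pos.2 hpq).le)).tendsto
      |>.mono_left (nhdsWithin_le_nhds (s := Ioi 0))).const_mul (f 1)
    rwa [Real.zero_rpow (sub_pos.2 hpq).ne', mul_zero] at h
  refine squeeze_zero' ?_ ?_ hbound
  · filter_upwards [self_mem_nhdsWithin] with t ht
    exact div_nonneg (hnonneg t ht) (Real.rpow_nonneg (le_of_lt ht) p)
  · filter_upwards [Ioo_mem_nhdsGT one_pos] with t ht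
    have hle : f t / t ^ q ≤ f 1 := by
      simpa using hmono ht.1 (show (0 : ℝ) < 1 from one_pos) ht.2.le
    rw [div_rpow_eq_div_rpow_mul_rpow_sub f p q ht.1]
    exact mul_le_mul_of_nonneg_right hle (Real.rpow_nonneg ht.1.le _)

theorem tendsto_div_rpow_atTop_of_monotoneOn {f : ℝ → ℝ} {p q : ℝ} (hpq : p < q)
    (hmono : MonotoneOn (fun t => f t / t ^ q) (Ioi 0)) (hf1 : 0 < f 1) :
    Tendsto (fun t => f t / t ^ p) atTop atTop := by
  refine tendsto_atTop_mono' atTop ?_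
    ((tendsto_rpow_atTop (sub_pos.2 hpq)).const_mul_atTop hf1)
  filter_upwards [eventually_ge_atTop 1] with t ht
  have ht0 : (0 : ℝ) < t := one_pos.trans_le ht
  have hle : f 1 ≤ f t / t ^ q := by
    simpa using hmono (show (0 : ℝ) < 1 from one_pos) ht0 ht
  rw [div_rpow_eq_div_rpow_mul_rpow_sub f p q ht0]
  exact mul_le_mul_of_nonneg_right hle (Real.rpow_nonneg ht0.le _)

/-- The index `q_Φ`, with `Φ'₊(t)` written as `derivWithin Φ (Ici t) t`. -/
noncomputable def qIndex (Φ : ℝ → ℝ) : ℝ :=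
  sInf {r : ℝ | ∃ t : ℝ, 0 < t ∧ r = t * derivWithin Φ (Ici t) t / Φ t}

section qIndex

variable {Φ : ℝ → ℝ}

theorem qIndex_mul_le (hpos : ∀ t ∈ Ioi 0, 0 < Φ t) (hq : qIndex Φ ≠ 0) {t : ℝ}
    (ht : 0 < t) : qIndex Φ * Φ t ≤ t * derivWithin Φ (Ici t) t := by
  have hbdd : BddBelow {r : ℝ | ∃ t : ℝ, 0 < t ∧ r = t * derivWithin Φ (Ici t) t / Φ t} := by
    by_contra h
    -- `sInf` of a set that is not bounded below is the junk value `0`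
    exact hq (Real.sInf_of_not_bddBelow h)
  rw [← le_div_iff₀ (hpos t ht)]
  exact csInf_le hbdd ⟨t, ht, rfl⟩

theorem hasDerivWithinAt_Ici_of_qIndex_pos (hpos : ∀ t ∈ Ioi 0, 0 < Φ t)
    (hq : 0 < qIndex Φ) {t : ℝ} (ht : 0 < t) :
    HasDerivWithinAt Φ (derivWithin Φ (Ici t) t) (Ici t) t := by
  refine (differentiableWithinAt_of_derivWithin_ne_zero fun h => ?_).hasDerivWithinAt
  have := qIndex_mul_le hpos hq.ne' ht
  rw [h, mul_zero] at this
  exact (mul_pos hq (hpos t ht)).not_ge this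

theorem monotoneOn_div_rpow_of_le_qIndex (hcont : ContinuousOn Φ (Ioi 0))
    (hpos : ∀ t ∈ Ioi 0, 0 < Φ t) (hq : 0 < qIndex Φ) {e : ℝ} (he : e ≤ qIndex Φ) :
    MonotoneOn (fun t => Φ t / t ^ e) (Ioi 0) :=
  monotoneOn_div_rpow_of_mul_le_mul_deriv hcont
    (fun _ ht => hasDerivWithinAt_Ici_of_qIndex_pos hpos hq ht) hpos
    (fun t ht => (mul_le_mul_of_nonneg_right he (hpos t ht).le).trans
      (qIndex_mul_le hpos hq.ne' ht))

end qIndex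

theorem qPhi_gt_one_monotone_limits_general (Φ : ℝ → ℝ)
    (hconv : ConvexOn ℝ (Set.Ici 0) Φ)
    (hpos : ∀ t, 0 < t → 0 < Φ t)
    (hq : 1 < sInf {r : ℝ | ∃ t : ℝ, 0 < t ∧ r = t * derivWithin Φ (Set.Ici t) t / Φ t}) :
    ∃ p : ℝ, 1 < p ∧
      (∀ t₁ t₂ : ℝ, 0 < t₁ → t₁ ≤ t₂ → Φ t₁ / t₁ ^ p ≤ Φ t₂ / t₂ ^ p) ∧
      Tendsto (fun t => Φ t / t ^ p) (𝓝[>] (0 : ℝ)) (𝓝 0) ∧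
      Tendsto (fun t => Φ t / t ^ p) atTop atTop := by
  change 1 < qIndex Φ at hq
  have hq0 : 0 < qIndex Φ := one_pos.trans hq
  have hcont : ContinuousOn Φ (Ioi 0) :=
    (hconv.subset Ioi_subset_Ici_self (convex_Ioi 0)).continuousOn isOpen_Ioi
  have hp : (1 + qIndex Φ) / 2 < qIndex Φ := by linarith
  have hmono_q := monotoneOn_div_rpow_of_le_qIndex hcont hpos hq0 le_rfl
  have hmono_p := monotoneOn_div_rpow_of_le_qIndex hcont hpos hq0 hp.le
  refine ⟨(1 + qIndex Φ) / 2, by linarith, fun t₁ t₂ ht₁ h12 => ?_, ?_, ?_⟩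
  · exact hmono_p ht₁ (ht₁.trans_le h12) h12
  · exact tendsto_div_rpow_nhdsGT_zero_of_monotoneOn hp hmono_q fun t ht => (hpos t ht).le
  · exact tendsto_div_rpow_atTop_of_monotoneOn hp hmono_q (hpos 1 one_pos)

/-- For a Young function `Φ`, finite and nonzero outside the origin, with
`q_Φ > 1`, there is `p > 1` such that `Φ(t)/t^p` is non-decreasing on `(0,∞)`,
tends to `0` as `t → 0+` and to `∞` as `t → ∞`. -/
theorem qPhi_gt_one_monotone_limits (Φ : ℝ → ℝ)
    (hconv : ConvexOn ℝ (Set.Ici 0) Φ) (h0 : Φ 0 = 0)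
    (hnn : ∀ t, 0 ≤ t → 0 ≤ Φ t) (hlim : Tendsto Φ atTop atTop)
    (hpos : ∀ t, 0 < t → 0 < Φ t)
    (hq : 1 < sInf {r : ℝ | ∃ t : ℝ, 0 < t ∧ r = t * derivWithin Φ (Set.Ici t) t / Φ t}) :
    ∃ p : ℝ, 1 < p ∧
      (∀ t₁ t₂ : ℝ, 0 < t₁ → t₁ ≤ t₂ → Φ t₁ / t₁ ^ p ≤ Φ t₂ / t₂ ^ p) ∧
      Tendsto (fun t => Φ t / t ^ p) (𝓝[>] (0 : ℝ)) (𝓝 0) ∧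
      Tendsto (fun t => Φ t / t ^ p) atTop atTop :=
  qPhi_gt_one_monotone_limits_general Φ hconv hpos hq
end
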